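/- Let w be in the monotone non-negative cone with w ≠ 0, let τ_i = (Σ_{j=1}^i w_j)^{-1}, and let b^{(i)} ∈ ℝ^n be the vector with first i entries equal to τ_i and the rest zero. Let A be the set of all signed permutations of the vectors b^{(1)},...,b^{(n)}. Then for every x ∈ ℝ^n, the atomic norm ‖x‖_A = inf{t ≥ 0 : x ∈ t·conv(A)} equals Ω_w(x). -/

import Mathlib

/-!
By the rearrangement inequality, `Ω_w(x)` is the largest of the sums `∑ i, w i * |x (σ i)|` over
permutations `σ`. Hence `Ω_w` is a seminorm, it does not increase under signed permutations, and
`Ω_w(b⁽ⁱ⁾) = τ_i (w_1 + ⋯ + w_i) = 1`; so `Ω_w ≤ 1` on `conv A` and `‖x‖_A ≥ Ω_w(x)`.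
Conversely, if `g` is `|x|` sorted decreasingly (with `g_{n+1} = 0`), then
`x = ∑ i, (g_i - g_{i+1}) τ_i⁻¹ a_i` where `a_i` is the signed permutation of `b⁽ⁱ⁾` that puts the
signs and order of `x` back, and the total weight is
`∑ i, (g_i - g_{i+1}) (w_1 + ⋯ + w_i) = ∑ j, w_j g_j = Ω_w(x)`.
-/

open Finset Pointwise

/-- The vector of absolute values of x, sorted in non-increasing order. -/
noncomputable def absSorted {n : ℕ} (x : Fin n → ℝ) : Fin n → ℝ :=
  fun i => |x (Tuple.sort (fun j => -|x j|) i)|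

/-- The ordered weighted l1 norm Omega_w(x). -/
noncomputable def owl {n : ℕ} (w x : Fin n → ℝ) : ℝ := ∑ i, w i * absSorted x i

/-- tau_i = (w_1 + ... + w_i)⁻¹ (0-indexed: sum over j ≤ i). -/
noncomputable def tau {n : ℕ} (w : Fin n → ℝ) (i : Fin n) : ℝ :=
  (∑ j ∈ Finset.Iic i, w j)⁻¹

/-- The atom b⁽ⁱ⁾: first i+1 entries equal to tau_i, remaining entries zero. -/
noncomputable def atomVec {n : ℕ} (w : Fin n → ℝ) (i : Fin n) : Fin n → ℝ :=
  fun j => if j ≤ i then tau w i else 0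

/-- The atomic set A: all signed permutations of the atoms b⁽¹⁾, ..., b⁽ⁿ⁾. -/
noncomputable def atomSet {n : ℕ} (w : Fin n → ℝ) : Set (Fin n → ℝ) :=
  { a | ∃ (σ : Equiv.Perm (Fin n)) (s : Fin n → ℝ) (i : Fin n),
      (∀ j, s j = 1 ∨ s j = -1) ∧ a = fun j => s j * atomVec w i (σ j) }

lemma Finset.sum_smul_mem_smul_convexHull {R E ι : Type*} [Field R] [LinearOrder R]
    [IsStrictOrderedRing R] [AddCommGroup E] [Module R E] {s : Set E} {t : Finset ι}
    (ht : t.Nonempty) {c : ι → R} {a : ι → E} (hc : ∀ i ∈ t, 0 ≤ c i) (ha : ∀ i ∈ t, a i ∈ s) :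
    ∑ i ∈ t, c i • a i ∈ (∑ i ∈ t, c i) • convexHull R s := by
  rcases (sum_nonneg hc).eq_or_lt with hzero | hpos
  · have hc₀ : ∀ i ∈ t, c i = 0 := (sum_eq_zero_iff_of_nonneg hc).1 hzero.symm
    obtain ⟨i, hi⟩ := ht
    rw [← hzero, sum_eq_zero fun i hi => by simp [hc₀ i hi],
      Set.zero_smul_set ⟨a i, subset_convexHull R s (ha i hi)⟩]
    exact Set.zero_mem_zero
  · exact ⟨_, t.centerMass_mem_convexHull hc hpos ha, smul_inv_smul₀ hpos.ne' _⟩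

section Rearrangement

variable {n : ℕ} {w : Fin n → ℝ}

lemma absSorted_antitone (x : Fin n → ℝ) : Antitone (absSorted x) := by
  intro i j hij
  simpa [absSorted] using Tuple.monotone_sort (fun j => -|x j|) hij

lemma absSorted_sort_symm (x : Fin n → ℝ) (j : Fin n) :
    absSorted x ((Tuple.sort fun j => -|x j|).symm j) = |x j| := by
  simp [absSorted]

lemma sum_mul_abs_comp_perm_le_owl (hw : Antitone w) (x : Fin n → ℝ) (σ : Equiv.Perm (Fin n)) :
    ∑ i, w i * |x (σ i)| ≤ owl w x := by
  have h := (hw.monovary (absSorted_antitone x)).sum_mul_comp_perm_le_sum_mul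
    (σ := σ.trans (Tuple.sort fun j => -|x j|).symm)
  simpa only [owl, Equiv.trans_apply, absSorted_sort_symm] using h

lemma owl_le_sum_mul_of_antitone (hw : Antitone w) {v : Fin n → ℝ} (hv : Antitone v)
    (hv₀ : ∀ j, 0 ≤ v j) : owl w v ≤ ∑ i, w i * v i := by
  simpa only [owl, absSorted, abs_of_nonneg (hv₀ _)] using
    (hw.monovary hv).sum_mul_comp_perm_le_sum_mul (σ := Tuple.sort fun j => -|v j|)

lemma owl_signed_perm_le (hw : Antitone w) (σ : Equiv.Perm (Fin n)) {s : Fin n → ℝ}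
    (hs : ∀ j, s j = 1 ∨ s j = -1) (v : Fin n → ℝ) :
    owl w (fun j => s j * v (σ j)) ≤ owl w v := by
  have habs : ∀ j, |s j * v (σ j)| = |v (σ j)| := fun j => by
    rcases hs j with h | h <;> simp [h]
  simpa only [owl, absSorted, habs, Equiv.coe_trans, Function.comp_apply] using
    sum_mul_abs_comp_perm_le_owl hw v ((Tuple.sort fun j => -|s j * v (σ j)|).trans σ)

end Rearrangement

section Seminorm

variable {n : ℕ} {w : Fin n → ℝ}

lemma owl_zero (w : Fin n → ℝ) : owl w 0 = 0 := by
  simp [owl, absSorted]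

lemma owl_add_le (hw : Antitone w) (hw₀ : ∀ i, 0 ≤ w i) (x y : Fin n → ℝ) :
    owl w (x + y) ≤ owl w x + owl w y := by
  set ρ := Tuple.sort fun j => -|(x + y) j|
  calc owl w (x + y) = ∑ i, w i * |(x + y) (ρ i)| := rfl
    _ ≤ ∑ i, (w i * |x (ρ i)| + w i * |y (ρ i)|) := by
      gcongr with i
      rw [← mul_add]
      exact mul_le_mul_of_nonneg_left (abs_add_le _ _) (hw₀ i)
    _ ≤ owl w x + owl w y := by
      rw [sum_add_distrib]
      exact add_le_add (sum_mul_abs_comp_perm_le_owl hw x ρ) (sum_mul_abs_comp_perm_le_owl hw y ρ)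

lemma owl_smul_le (hw : Antitone w) (r : ℝ) (x : Fin n → ℝ) :
    owl w (r • x) ≤ ‖r‖ * owl w x := by
  set ρ := Tuple.sort fun j => -|(r • x) j|
  calc owl w (r • x) = ∑ i, w i * |(r • x) (ρ i)| := rfl
    _ = ‖r‖ * ∑ i, w i * |x (ρ i)| := by
        simp only [mul_sum, Pi.smul_apply, smul_eq_mul, abs_mul, Real.norm_eq_abs]
        exact sum_congr rfl fun i _ => by ring
    _ ≤ ‖r‖ * owl w x := by
      gcongr
      exact sum_mul_abs_comp_perm_le_owl hw x ρ

noncomputable def owlSeminorm (hw : Antitone w) (hw₀ : ∀ i, 0 ≤ w i) : Seminorm ℝ (Fin n → ℝ) :=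
  .ofSMulLE (owl w) (owl_zero w) (owl_add_le hw hw₀) (owl_smul_le hw)

lemma owlSeminorm_apply (hw : Antitone w) (hw₀ : ∀ i, 0 ≤ w i) (x : Fin n → ℝ) :
    owlSeminorm hw hw₀ x = owl w x := rfl

end Seminorm

section Atoms

variable {n : ℕ} {w : Fin n → ℝ}

lemma sum_Iic_pos (hw : Antitone w) (hw₀ : ∀ i, 0 ≤ w i) (hne : w ≠ 0) (i : Fin n) :
    0 < ∑ j ∈ Iic i, w j := by
  obtain ⟨k, hk⟩ := Function.ne_iff.mp hne
  have hmin : 0 < w (min i k) := ((hw₀ k).lt_of_ne' hk).trans_le (hw (min_le_right i k))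
  exact hmin.trans_le (single_le_sum (fun j _ => hw₀ j) (mem_Iic.mpr (min_le_left i k)))

lemma tau_pos (hw : Antitone w) (hw₀ : ∀ i, 0 ≤ w i) (hne : w ≠ 0) (i : Fin n) :
    0 < tau w i :=
  inv_pos.mpr (sum_Iic_pos hw hw₀ hne i)

lemma tau_nonneg (hw₀ : ∀ i, 0 ≤ w i) (i : Fin n) : 0 ≤ tau w i :=
  inv_nonneg.mpr (sum_nonneg fun j _ => hw₀ j)

lemma atomVec_nonneg (hw₀ : ∀ i, 0 ≤ w i) (i j : Fin n) : 0 ≤ atomVec w i j := by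
  unfold atomVec
  split_ifs
  exacts [tau_nonneg hw₀ i, le_rfl]

lemma atomVec_antitone (hw₀ : ∀ i, 0 ≤ w i) (i : Fin n) : Antitone (atomVec w i) := by
  intro a b hab
  by_cases hb : b ≤ i
  · simp [atomVec, hb, hab.trans hb]
  · simpa [atomVec, hb] using atomVec_nonneg hw₀ i a

lemma owl_atomVec_le_one (hw : Antitone w) (hw₀ : ∀ i, 0 ≤ w i) (i : Fin n) :
    owl w (atomVec w i) ≤ 1 :=
  calc owl w (atomVec w i) ≤ ∑ j, w j * atomVec w i j :=
        owl_le_sum_mul_of_antitone hw (atomVec_antitone hw₀ i) (atomVec_nonneg hw₀ i)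
    _ = (∑ j ∈ Iic i, w j) * tau w i := by
        simp only [atomVec, mul_ite, mul_zero, sum_mul, ← sum_filter, filter_ge_eq_Iic]
    _ ≤ 1 := mul_inv_le_one

lemma owl_le_one_of_mem_atomSet (hw : Antitone w) (hw₀ : ∀ i, 0 ≤ w i) {a : Fin n → ℝ}
    (ha : a ∈ atomSet w) : owl w a ≤ 1 := by
  obtain ⟨σ, s, i, hs, rfl⟩ := ha
  exact (owl_signed_perm_le hw σ hs _).trans (owl_atomVec_le_one hw hw₀ i)

lemma convexHull_atomSet_subset_closedBall (hw : Antitone w) (hw₀ : ∀ i, 0 ≤ w i) :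
    convexHull ℝ (atomSet w) ⊆ (owlSeminorm hw hw₀).closedBall 0 1 :=
  convexHull_min
    (fun _ ha => (Seminorm.mem_closedBall_zero _).2 (owl_le_one_of_mem_atomSet hw hw₀ ha))
    (Seminorm.convex_closedBall _ _ _)

lemma owl_le_of_mem_smul_convexHull (hw : Antitone w) (hw₀ : ∀ i, 0 ≤ w i) {t : ℝ} (ht : 0 ≤ t)
    {x : Fin n → ℝ} (hx : x ∈ t • convexHull ℝ (atomSet w)) : owl w x ≤ t := by
  obtain ⟨y, hy, rfl⟩ := hx
  have hy₁ : owl w y ≤ 1 :=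
    (Seminorm.mem_closedBall_zero _).1 (convexHull_atomSet_subset_closedBall hw hw₀ hy)
  calc owl w (t • y) = t * owl w y := by
        rw [← owlSeminorm_apply hw hw₀, map_smul_eq_mul, Real.norm_of_nonneg ht]
        rfl
    _ ≤ t := mul_le_of_le_one_right ht hy₁

end Atoms

section Layers

variable {n : ℕ}

noncomputable def zeroExtend (g : Fin n → ℝ) (m : ℕ) : ℝ :=
  if h : m < n then g ⟨m, h⟩ else 0

noncomputable def layerWeight (g : Fin n → ℝ) (i : Fin n) : ℝ :=
  zeroExtend g i - zeroExtend g (i + 1)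

lemma layerWeight_nonneg {g : Fin n → ℝ} (hg : Antitone g) (hg₀ : ∀ i, 0 ≤ g i) (i : Fin n) :
    0 ≤ layerWeight g i := by
  by_cases h : (i : ℕ) + 1 < n
  · simpa [layerWeight, zeroExtend, h] using hg (show i ≤ ⟨i + 1, h⟩ from Fin.le_def.2 (by simp))
  · simpa [layerWeight, zeroExtend, h] using hg₀ i

lemma sum_Ici_layerWeight (g : Fin n → ℝ) (k : Fin n) : ∑ i ∈ Ici k, layerWeight g i = g k :=
  calc ∑ i ∈ Ici k, layerWeight g i
      = -∑ m ∈ Ico (k : ℕ) n, (zeroExtend g (m + 1) - zeroExtend g m) := by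
        simp only [← Fin.map_valEmbedding_Ici, sum_map, ← sum_neg_distrib, neg_sub]
        rfl
    _ = g k := by rw [sum_Ico_sub _ k.2.le]; simp [zeroExtend]

end Layers

section Decomposition

variable {n : ℕ} {w : Fin n → ℝ}

lemma sum_div_tau (f : Fin n → ℝ) : ∑ i, f i / tau w i = ∑ j, w j * ∑ i ∈ Ici j, f i :=
  calc ∑ i, f i / tau w i = ∑ i, ∑ j ∈ Iic i, f i * w j := by
        simp only [tau, div_inv_eq_mul, mul_sum]
    _ = ∑ j, ∑ i ∈ Ici j, f i * w j := sum_comm' (by simp)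
    _ = ∑ j, w j * ∑ i ∈ Ici j, f i := by simp only [mul_sum, mul_comm]

lemma sum_div_tau_mul_atomVec (hτ : ∀ i, tau w i ≠ 0) (f : Fin n → ℝ) (k : Fin n) :
    ∑ i, f i / tau w i * atomVec w i k = ∑ i ∈ Ici k, f i := by
  simp only [atomVec, mul_ite, mul_zero, div_mul_cancel₀ _ (hτ _), ← sum_filter,
    filter_le_eq_Ici]

lemma exists_atom_decomposition (hw : Antitone w) (hw₀ : ∀ i, 0 ≤ w i) (hne : w ≠ 0)
    (x : Fin n → ℝ) :
    ∃ (c : Fin n → ℝ) (a : Fin n → Fin n → ℝ), (∀ i, 0 ≤ c i) ∧ (∀ i, a i ∈ atomSet w) ∧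
      ∑ i, c i = owl w x ∧ ∑ i, c i • a i = x := by
  set ρ := Tuple.sort fun j => -|x j|
  set d := layerWeight (absSorted x)
  set s : Fin n → ℝ := fun j => if 0 ≤ x j then 1 else -1
  have hτ := tau_pos hw hw₀ hne
  refine ⟨fun i => d i / tau w i, fun i j => s j * atomVec w i (ρ.symm j),
    fun i => div_nonneg (layerWeight_nonneg (absSorted_antitone x) (fun _ => abs_nonneg _) i)
      (hτ i).le,
    fun i => ⟨ρ.symm, s, i, fun j => by by_cases h : 0 ≤ x j <;> simp [s, h], rfl⟩, ?_, ?_⟩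
  · simp only [sum_div_tau, d, sum_Ici_layerWeight]
    rfl
  · funext j
    calc (∑ i, (d i / tau w i) • fun j => s j * atomVec w i (ρ.symm j)) j
        = s j * ∑ i, d i / tau w i * atomVec w i (ρ.symm j) := by
          simp only [Finset.sum_apply, Pi.smul_apply, smul_eq_mul, mul_sum]
          exact sum_congr rfl fun i _ => by ring
      _ = s j * |x j| := by
          rw [sum_div_tau_mul_atomVec (fun i => (hτ i).ne'), sum_Ici_layerWeight,
            absSorted_sort_symm]
      _ = x j := by
          by_cases h : 0 ≤ x j
          · simp [s, h, abs_of_nonneg h]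
          · simp [s, h, abs_of_neg (not_le.mp h)]

end Decomposition

lemma mem_owl_smul_convexHull_atomSet {n : ℕ} {w : Fin n → ℝ} (hw : Antitone w)
    (hw₀ : ∀ i, 0 ≤ w i) (hne : w ≠ 0) (x : Fin n → ℝ) :
    x ∈ owl w x • convexHull ℝ (atomSet w) := by
  obtain ⟨c, a, hc, ha, hsum, hx⟩ := exists_atom_decomposition hw hw₀ hne x
  obtain ⟨k, -⟩ := Function.ne_iff.mp hne
  simpa only [hsum, hx] using
    sum_smul_mem_smul_convexHull ⟨k, mem_univ k⟩ (fun i _ => hc i) (fun i _ => ha i)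

/-- Atomic formulation of the OWL norm: the gauge of the convex hull of the atomic
set A equals Omega_w. -/
theorem owl_atomic_formulation {n : ℕ} (w : Fin n → ℝ) (hmono : Antitone w)
    (hnonneg : ∀ i, 0 ≤ w i) (hne : w ≠ 0) (x : Fin n → ℝ) :
    sInf {t : ℝ | 0 ≤ t ∧ x ∈ t • convexHull ℝ (atomSet w)} = owl w x :=
  IsLeast.csInf_eq
    ⟨⟨apply_nonneg (owlSeminorm hmono hnonneg) x,
        mem_owl_smul_convexHull_atomSet hmono hnonneg hne x⟩,
      fun _ ⟨ht, hx⟩ => owl_le_of_mem_smul_convexHull hmono hnonneg ht hx⟩
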